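/- arXiv:1807.01899 — 2 statements merged into one kernel-verified Lean document; each statement's English description precedes it below -/
import Mathlib

section
/- For integers x, ℓ ≥ 2, the maximal weight multiplicity of the simple finite-dimensional gl(ℓ+1,ℂ)-module with highest weight (x,1,0,…,0) (with ℓ−1 zeros) satisfies d((x,1,0^{(ℓ-1)})) ≥ min{x, ℓ}. -/
set_option maxHeartbeats 1000000
set_option synthInstance.maxHeartbeats 100000

attribute [local instance 100] LieRing.ofAssociativeRing

noncomputable section

/-- The Lie algebra `gl(m, ℂ)` of `m × m` complex matrices. -/
abbrev glMat (m : ℕ) : Type := Matrix (Fin m) (Fin m) ℂ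

section GlWeights

variable (m : ℕ) (M : Type) [AddCommGroup M] [Module ℂ M]
  [LieRingModule (glMat m) M] [LieModule ℂ (glMat m) M]

/-- The weight space of a `gl(m,ℂ)`-module attached to `lam : Fin m → ℂ` (the diagonal
Cartan subalgebra acting via `diagonal d ↦ ∑ᵢ d i * lam i`). -/
def glWtSp (lam : Fin m → ℂ) : Submodule ℂ M where
  carrier := {v | ∀ d : Fin m → ℂ,
    ⁅(Matrix.diagonal d : glMat m), v⁆ = (∑ i, d i * lam i) • v}
  zero_mem' := by intro d; simp
  add_mem' := by intro a b ha hb d; rw [lie_add, ha d, hb d, smul_add]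
  smul_mem' := by intro c a ha d; rw [lie_smul, ha d, smul_comm]

/-- `v` is a highest weight vector of weight `lam` with respect to the Borel subalgebra of
upper-triangular matrices. -/
def IsHWVector (lam : Fin m → ℂ) (v : M) : Prop :=
  v ∈ glWtSp m M lam ∧
  ∀ i j : Fin m, i < j → ⁅(Matrix.single i j (1 : ℂ) : glMat m), v⁆ = 0

/-- `M` is a simple finite-dimensional `gl(m,ℂ)`-module of highest weight `lam`
(with respect to the upper-triangular Borel subalgebra), i.e. `M ≅ L(lam)`. -/
def IsSimpleFDHW (lam : Fin m → ℂ) : Prop :=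
  LieModule.IsIrreducible ℂ (glMat m) M ∧ FiniteDimensional ℂ M ∧
  ∃ v : M, v ≠ 0 ∧ IsHWVector m M lam v

/-- The maximal weight multiplicity (`deg`) of a `gl(m,ℂ)`-module. -/
def maxMult : ℕ :=
  sSup {d : ℕ | ∃ lam : Fin m → ℂ, d = Module.finrank ℂ (glWtSp m M lam)}

end GlWeights


/-!
Let `v` be the highest weight vector, `k = min x l`, `S = {2, …, k}`, and let `E a b` be the
matrix units. The `k` vectors `(∏_{m ∈ S} E m 0) v` and `(∏_{m ∈ S \ {j}} E m 0) E j 1 E 1 0 v`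
(`j ∈ S`) all have weight `λ - (k - 1) ε₀ + ∑_{m ∈ S} ε_m`. The raising operators
`∏_{m ∈ S} E 0 m` and `E 0 1 E 1 j ∏_{m ∈ S \ {j}} E 0 m` map them back to multiples of `v`, and
the resulting `k × k` matrix of scalars is a nonzero descending factorial times the matrix with
entries `x` at `(∗, ∗)`, `x - 1` at `(∗, i)` and `(j, ∗)`, `2 (x - 1)` at `(j, j)` and `x - 3` at
`(j, i)`, `i ≠ j`. Its kernel is trivial because `x ∉ {0, -1, k - 1}`, so the `k` vectors are
linearly independent. The computation uses that `E m' m` kills `v` for distinct `m, m' ∈ S`; for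
`m' > m` this is the `sl₂` fact that in a finite-dimensional module a primitive vector of weight
`0` is killed by `f`.
-/

theorem descPochhammer_succ_eval_left {R : Type*} [CommRing R] (N : ℕ) (b : R) :
    (descPochhammer R (N + 1)).eval b = b * (descPochhammer R N).eval (b - 1) := by
  simp [descPochhammer_succ_left, Polynomial.eval_comp]

open Matrix in
theorem linearIndependent_of_apply_eq_smul {K V W ι κ : Type*} [Field K] [AddCommGroup V]
    [Module K V] [AddCommGroup W] [Module K W] [Fintype ι] {u : ι → V}
    {φ : κ → V →ₗ[K] W} {M : Matrix κ ι K} {w : W} (hw : w ≠ 0) (hM : ∀ g, M *ᵥ g = 0 → g = 0)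
    (h : ∀ i j, φ i (u j) = M i j • w) : LinearIndependent K u := by
  rw [Fintype.linearIndependent_iff]
  intro g hg
  refine congrFun (hM g (funext fun i => ?_))
  have hφ := congrArg (φ i) hg
  simp only [map_sum, map_smul, h, smul_smul, ← Finset.sum_smul, map_zero] at hφ
  simpa [mulVec, dotProduct, mul_comm] using (smul_eq_zero.mp hφ).resolve_right hw

def hookMatrix (ι : Type*) [DecidableEq ι] (a : ℂ) : Matrix (Option ι) (Option ι) ℂ :=
  Matrix.of fun
    | none, none => a
    | none, some _ => a - 1
    | some _, none => a - 1
    | some j, some i => if i = j then 2 * (a - 1) else a - 3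

open Matrix in
theorem hookMatrix_mulVec_eq_zero {ι : Type*} [Fintype ι] [DecidableEq ι] {a : ℂ}
    (ha₀ : a ≠ 0) (ha₁ : a + 1 ≠ 0) (ha : a ≠ Fintype.card ι) {g : Option ι → ℂ}
    (hg : hookMatrix ι a *ᵥ g = 0) : g = 0 := by
  set T := ∑ i, g (some i)
  have hnone : a * g none + (a - 1) * T = 0 := by
    simpa [mulVec, dotProduct, Fintype.sum_option, hookMatrix, Finset.mul_sum, T]
      using congrFun hg none
  have hsome (j : ι) : (a - 1) * g none + (a - 3) * T + (a + 1) * g (some j) = 0 := by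
    have hrow := congrFun hg (some j)
    simp only [mulVec, dotProduct, Fintype.sum_option, hookMatrix, of_apply,
      Pi.zero_apply] at hrow
    have hsplit : ∑ i, (if i = j then 2 * (a - 1) else a - 3) * g (some i) =
        (a - 3) * T + (a + 1) * g (some j) := by
      calc ∑ i, (if i = j then 2 * (a - 1) else a - 3) * g (some i)
          = ∑ i, ((a - 3) * g (some i) + if i = j then (a + 1) * g (some i) else 0) :=
            Finset.sum_congr rfl fun i _ => by split_ifs <;> ring
        _ = (a - 3) * T + (a + 1) * g (some j) := by
            rw [Finset.sum_add_distrib, ← Finset.mul_sum, Finset.sum_ite_eq']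
            simp [T]
    linear_combination hrow - hsplit
  have hsum : (Fintype.card ι : ℂ) * ((a - 1) * g none + (a - 3) * T) + (a + 1) * T = 0 := by
    have := Finset.sum_eq_zero (s := Finset.univ) fun j _ => hsome j
    simp only [Finset.sum_add_distrib, ← Finset.mul_sum, Finset.sum_const, Finset.card_univ,
      nsmul_eq_mul] at this
    linear_combination this
  have hT : T = 0 := by
    have hT' : ((a + 1) * (a - Fintype.card ι)) * T = 0 := by
      linear_combination a * hsum - (Fintype.card ι : ℂ) * (a - 1) * hnone
    exact (mul_eq_zero.mp hT').resolve_left (mul_ne_zero ha₁ (sub_ne_zero.mpr ha))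
  have hg₀ : g none = 0 := by
    simpa [hT, ha₀] using hnone
  funext b
  rcases b with _ | j
  · exact hg₀
  · simpa [hT, hg₀, ha₁] using hsome j

theorem le_maxMult_of_linearIndependent {m : ℕ} {M : Type} [AddCommGroup M] [Module ℂ M]
    [LieRingModule (glMat m) M] [LieModule ℂ (glMat m) M] [FiniteDimensional ℂ M] {ι : Type*}
    [Fintype ι] {μ : Fin m → ℂ} {u : ι → M} (hu : LinearIndependent ℂ u)
    (hμ : ∀ i, u i ∈ glWtSp m M μ) : Fintype.card ι ≤ maxMult m M := by
  have hbdd : BddAbove {d | ∃ lam : Fin m → ℂ, d = Module.finrank ℂ (glWtSp m M lam)} :=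
    ⟨Module.finrank ℂ M, by rintro d ⟨lam, rfl⟩; exact Submodule.finrank_le _⟩
  calc Fintype.card ι ≤ Module.finrank ℂ (glWtSp m M μ) :=
        (LinearIndependent.of_comp (glWtSp m M μ).subtype
          (v := fun i => (⟨u i, hμ i⟩ : glWtSp m M μ)) hu).fintype_card_le_finrank
    _ ≤ maxMult m M := le_csSup hbdd ⟨μ, rfl⟩

namespace GlMat

open LieModule

variable {n : ℕ} {L : Type} [AddCommGroup L] [Module ℂ L]
  [LieRingModule (glMat n) L] [LieModule ℂ (glMat n) L]

abbrev E (a b : Fin n) : glMat n := Matrix.single a b 1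

lemma lie_E_E (a b c d : Fin n) :
    ⁅E a b, E c d⁆ = (if b = c then E a d else 0) - (if d = a then E c b else 0) := by
  rw [Ring.lie_def]
  congr 1 <;> split_ifs with h <;> simp [Matrix.single_mul_single_of_ne, h]

lemma E_self (a : Fin n) : E a a = Matrix.diagonal (Pi.single a 1) :=
  (Matrix.diagonal_single a 1).symm

lemma lie_E_self_of_mem {lam : Fin n → ℂ} {w : L} (hw : w ∈ glWtSp n L lam) (a : Fin n) :
    ⁅E a a, w⁆ = lam a • w := by
  rw [E_self, hw]
  simp [Pi.single_apply]

lemma diagonal_lie_E (d : Fin n → ℂ) (a b : Fin n) :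
    ⁅(Matrix.diagonal d : glMat n), E a b⁆ = (d a - d b) • E a b := by
  ext i j
  by_cases h : a = i ∧ b = j
  · obtain ⟨rfl, rfl⟩ := h
    simp [Ring.lie_def, Matrix.mul_diagonal]
  · have hz (c : ℂ) : Matrix.single a b c i j = 0 := Matrix.single_apply_of_ne _ _ _ _ _ h
    simp [Ring.lie_def, Matrix.diagonal_mul, Matrix.mul_diagonal, hz]

lemma lie_E_mem_glWtSp {lam : Fin n → ℂ} {w : L} (hw : w ∈ glWtSp n L lam) (a b : Fin n) :
    ⁅E a b, w⁆ ∈ glWtSp n L (lam + Pi.single a 1 - Pi.single b 1) := by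
  intro d
  rw [leibniz_lie, diagonal_lie_E, hw d, smul_lie, lie_smul]
  simp only [Pi.add_apply, Pi.sub_apply, mul_add, mul_sub, Finset.sum_add_distrib,
    Finset.sum_sub_distrib, Pi.single_apply, mul_ite, mul_one, mul_zero, Finset.sum_ite_eq',
    Finset.mem_univ, if_true]
  module

lemma isSl2Triple_E {a b : Fin n} (hab : a ≠ b) :
    IsSl2Triple (E a a - E b b) (E a b) (E b a) where
  h_ne_zero h := by simpa [Matrix.single_apply, hab.symm] using congrFun (congrFun h a) a
  lie_e_f := by simp [lie_E_E]
  lie_h_e_nsmul := by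
    simp [sub_lie, lie_E_E, hab.symm, ← Matrix.single_add, one_add_one_eq_two]
  lie_h_f_nsmul := by
    simp [lie_E_E, hab, sub_eq_add_neg, ← neg_add, ← Matrix.single_add, one_add_one_eq_two]

lemma lie_E_eq_zero_of_lie_E_swap_eq_zero [FiniteDimensional ℂ L] {lam : Fin n → ℂ} {v : L}
    (hv : v ∈ glWtSp n L lam) {a b : Fin n} (hab : a ≠ b) (hlam : lam a = lam b)
    (he : ⁅E a b, v⁆ = 0) : ⁅E b a, v⁆ = 0 := by
  rcases eq_or_ne v 0 with rfl | hv0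
  · exact lie_zero _
  have hprim : (isSl2Triple_E hab).HasPrimitiveVectorWith v (0 : ℂ) :=
    ⟨hv0, by rw [sub_lie, lie_E_self_of_mem hv, lie_E_self_of_mem hv, hlam, sub_self, zero_smul],
      he⟩
  simpa using hprim.pow_toEnd_f_eq_zero_of_eq_nat (n := 0) (by simp)

lemma commute_toEnd_of_lie_eq_zero {A B : glMat n} (h : ⁅A, B⁆ = 0) :
    Commute (toEnd ℂ (glMat n) L A) (toEnd ℂ (glMat n) L B) := by
  rw [commute_iff_lie_eq, ← LieHom.map_lie, h, map_zero]

section RootProducts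

variable (o : Fin n)

-- The factor at `o` is `1`, so that all factors commute and `Finset.noncommProd` applies to
-- every `W`.
def rootOp (F : Fin n → glMat n) (a : Fin n) : Module.End ℂ L :=
  if a = o then 1 else toEnd ℂ (glMat n) L (F a)

lemma rootOp_commute {F : Fin n → glMat n} (hF : ∀ a ≠ o, ∀ b ≠ o, ⁅F a, F b⁆ = 0)
    (a b : Fin n) : Commute (rootOp o F a) (rootOp (L := L) o F b) := by
  unfold rootOp
  split_ifs with ha hb hb
  exacts [Commute.one_left _, Commute.one_left _, Commute.one_right _,
    commute_toEnd_of_lie_eq_zero (hF a ha b hb)]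

def rootProd (F : Fin n → glMat n) (hF : ∀ a ≠ o, ∀ b ≠ o, ⁅F a, F b⁆ = 0)
    (W : Finset (Fin n)) : Module.End ℂ L :=
  W.noncommProd (rootOp o F) fun a _ b _ _ => rootOp_commute o hF a b

variable {o} {F : Fin n → glMat n} {hF : ∀ a ≠ o, ∀ b ≠ o, ⁅F a, F b⁆ = 0}

@[simp]
lemma rootProd_empty : rootProd o F hF ∅ = (1 : Module.End ℂ L) :=
  Finset.noncommProd_empty _ _

lemma rootProd_insert {a : Fin n} {W : Finset (Fin n)} (ha : a ∉ W) :
    rootProd o F hF (insert a W) = rootOp (L := L) o F a * rootProd o F hF W :=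
  Finset.noncommProd_insert_of_notMem _ _ _ _ ha

lemma rootProd_insert_apply {a : Fin n} {W : Finset (Fin n)} (ha : a ∉ W) (hao : a ≠ o)
    (w : L) : rootProd o F hF (insert a W) w = ⁅F a, rootProd o F hF W w⁆ := by
  rw [rootProd_insert ha, Module.End.mul_apply, rootOp, if_neg hao]
  rfl

variable (o)

abbrev lowerProd : Finset (Fin n) → Module.End ℂ L :=
  rootProd o (fun a => E a o) fun a ha b hb => by simp [lie_E_E, ha.symm, hb.symm]

abbrev raiseProd : Finset (Fin n) → Module.End ℂ L :=
  rootProd o (E o) fun a ha b hb => by simp [lie_E_E, ha, hb]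

variable {o}

lemma lowerProd_insert_apply {a : Fin n} {W : Finset (Fin n)} (ha : a ∉ W) (hao : a ≠ o)
    (w : L) : lowerProd o (insert a W) w = ⁅E a o, lowerProd o W w⁆ :=
  rootProd_insert_apply ha hao w

lemma raiseProd_insert_apply {a : Fin n} {W : Finset (Fin n)} (ha : a ∉ W) (hao : a ≠ o)
    (w : L) : raiseProd o (insert a W) w = ⁅E o a, raiseProd o W w⁆ :=
  rootProd_insert_apply ha hao w

lemma lowerProd_empty : lowerProd o ∅ = (1 : Module.End ℂ L) :=
  rootProd_empty

lemma lowerProd_singleton {a : Fin n} (hao : a ≠ o) (w : L) :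
    lowerProd o {a} w = ⁅E a o, w⁆ := by
  rw [← insert_empty_eq, lowerProd_insert_apply (Finset.notMem_empty a) hao]
  rfl

lemma raiseProd_apply_of_mem {a : Fin n} {W : Finset (Fin n)} (ha : a ∈ W) (hao : a ≠ o)
    (w : L) : raiseProd o W w = ⁅E o a, raiseProd o (W.erase a) w⁆ := by
  conv_lhs => rw [← Finset.insert_erase ha]
  exact raiseProd_insert_apply (Finset.notMem_erase a W) hao w

variable (o)

/-- `y` is a weight vector killed by the raising operators `E o m` of `gl({o} ∪ Ω)`, on which
`gl(Ω)` acts trivially. -/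
structure IsPrimitive (Ω : Finset (Fin n)) (μ : Fin n → ℂ) (y : L) : Prop where
  mem : y ∈ glWtSp n L μ
  notMem : o ∉ Ω
  lie_raise : ∀ m ∈ Ω, ⁅E o m, y⁆ = 0
  lie_eq_zero : ∀ m ∈ Ω, ∀ m' ∈ Ω, m' ≠ m → ⁅E m' m, y⁆ = 0
  weight_eq_zero : ∀ m ∈ Ω, μ m = 0

variable {o} {Ω W : Finset (Fin n)} {μ : Fin n → ℂ} {y : L}

lemma lowerProd_mem_glWtSp (hoW : o ∉ W) (hy : y ∈ glWtSp n L μ) :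
    lowerProd o W y ∈
      glWtSp n L (μ + ∑ a ∈ W, Pi.single a 1 - (W.card : ℂ) • Pi.single o 1) := by
  induction W using Finset.induction_on with
  | empty => simpa using hy
  | @insert a W ha ih =>
    have hao : a ≠ o := fun h => hoW (h ▸ Finset.mem_insert_self a W)
    rw [lowerProd_insert_apply ha hao]
    convert lie_E_mem_glWtSp (ih fun h => hoW (Finset.mem_insert_of_mem h)) a o using 2
    rw [Finset.sum_insert ha, Finset.card_insert_of_notMem ha]
    push_cast
    module

lemma lie_E_lowerProd_of_ne (hoΩ : o ∉ Ω)
    (hy : ∀ m ∈ Ω, ∀ m' ∈ Ω, m' ≠ m → ⁅E m' m, y⁆ = 0) (hW : W ⊆ Ω) {m m' : Fin n}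
    (hm : m ∈ Ω) (hm' : m' ∈ Ω) (hne : m' ≠ m) :
    ⁅E m' m, lowerProd o W y⁆ =
      if m ∈ W then ⁅E m' o, lowerProd o (W.erase m) y⁆ else 0 := by
  induction W using Finset.induction_on with
  | empty => simpa using hy m hm m' hm' hne
  | @insert a W ha ih =>
    have haΩ : a ∈ Ω := hW (Finset.mem_insert_self a W)
    have hao : a ≠ o := fun h => hoΩ (h ▸ haΩ)
    have hm'o : m' ≠ o := fun h => hoΩ (h ▸ hm')
    rw [lowerProd_insert_apply ha hao, leibniz_lie, lie_E_E, if_neg hm'o.symm, sub_zero,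
      ih (fun i hi => hW (Finset.mem_insert_of_mem hi))]
    by_cases hma : m = a
    · subst hma
      simp [ha, Finset.erase_insert ha]
    · rw [if_neg hma, zero_lie, zero_add]
      by_cases hmW : m ∈ W
      · have haW : a ∉ W.erase m := fun h => ha (Finset.mem_of_mem_erase h)
        have hcomm := lie_lie (E a o) (E m' o) (lowerProd o (W.erase m) y)
        rw [lie_E_E, if_neg hm'o.symm, if_neg hao.symm, sub_zero, zero_lie] at hcomm
        rw [if_pos hmW, if_pos (Finset.mem_insert_of_mem hmW), sub_eq_zero.mp hcomm.symm,
          ← lowerProd_insert_apply haW hao, Finset.erase_insert_of_ne (Ne.symm hma)]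
      · simp [hmW, hma]

lemma IsPrimitive.lie_E_lowerProd (hy : IsPrimitive o Ω μ y) (hW : W ⊆ Ω) {m : Fin n}
    (hm : m ∈ Ω) :
    ⁅E o m, lowerProd o W y⁆ =
      if m ∈ W then (μ o + 1 - W.card) • lowerProd o (W.erase m) y else 0 := by
  induction W using Finset.induction_on with
  | empty => simpa using hy.lie_raise m hm
  | @insert a W ha ih =>
    have hWΩ : W ⊆ Ω := fun i hi => hW (Finset.mem_insert_of_mem hi)
    have haΩ : a ∈ Ω := hW (Finset.mem_insert_self a W)
    have hao : a ≠ o := fun h => hy.notMem (h ▸ haΩ)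
    have hoW : o ∉ W := fun h => hy.notMem (hWΩ h)
    rw [lowerProd_insert_apply ha hao, leibniz_lie, lie_E_E, if_pos rfl]
    by_cases hma : m = a
    · subst hma
      have hwt := lowerProd_mem_glWtSp hoW hy.mem
      rw [if_pos rfl, sub_lie, lie_E_self_of_mem hwt, lie_E_self_of_mem hwt, ih hWΩ, if_neg ha,
        lie_zero, add_zero, if_pos (Finset.mem_insert_self m W), Finset.erase_insert ha,
        Finset.card_insert_of_notMem ha]
      simp [Pi.single_apply, hao, ha, hoW, hy.weight_eq_zero m haΩ]
    · rw [if_neg hma, zero_sub, neg_lie,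
        lie_E_lowerProd_of_ne hy.notMem hy.lie_eq_zero hWΩ hm haΩ (Ne.symm hma), ih hWΩ]
      by_cases hmW : m ∈ W
      · have haW : a ∉ W.erase m := fun h => ha (Finset.mem_of_mem_erase h)
        rw [if_pos hmW, if_pos hmW, if_pos (Finset.mem_insert_of_mem hmW), lie_smul,
          ← lowerProd_insert_apply haW hao, Finset.erase_insert_of_ne (Ne.symm hma),
          Finset.card_insert_of_notMem ha]
        push_cast
        module
      · simp [hmW, hma]

lemma IsPrimitive.raiseProd_lowerProd (hy : IsPrimitive o Ω μ y) {W' : Finset (Fin n)}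
    (hW : W ⊆ Ω) (hW' : W' ⊆ W) :
    raiseProd o W' (lowerProd o W y) =
      (descPochhammer ℂ W'.card).eval (μ o - (W \ W').card) • lowerProd o (W \ W') y := by
  induction W' using Finset.induction_on with
  | empty => simp
  | @insert a W' ha ih =>
    have haW : a ∈ W := hW' (Finset.mem_insert_self a W')
    have hao : a ≠ o := fun h => hy.notMem (h ▸ hW haW)
    have hW'W : W' ⊆ W := fun i hi => hW' (Finset.mem_insert_of_mem hi)
    have hsd : W \ W' = insert a (W \ insert a W') := by
      rw [Finset.sdiff_insert, Finset.insert_erase (Finset.mem_sdiff.mpr ⟨haW, ha⟩)]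
    have hcard : (W \ W').card = (W \ insert a W').card + 1 := by
      rw [hsd, Finset.card_insert_of_notMem (by simp)]
    rw [raiseProd_insert_apply ha hao, ih hW'W, lie_smul,
      hy.lie_E_lowerProd (Finset.sdiff_subset.trans hW) (hW haW),
      if_pos (Finset.mem_sdiff.mpr ⟨haW, ha⟩), smul_smul, Finset.card_insert_of_notMem ha,
      descPochhammer_succ_eval_left, hcard, Finset.sdiff_insert]
    congr 1
    push_cast
    ring_nf

end RootProducts

section Hook

variable {o t : Fin n} {S : Finset (Fin n)} {lam : Fin n → ℂ} {v : L}

/-- The properties of the highest weight vector `v` of `L((x, 1, 0, …, 0))` that the proof uses,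
for the indices `o = 0`, `t = 1` and `S ⊆ {2, …, l}`. -/
structure IsHookPrimitive (o t : Fin n) (S : Finset (Fin n)) (lam : Fin n → ℂ) (v : L) : Prop
    extends IsPrimitive o S lam v where
  t_ne_o : t ≠ o
  t_notMem : t ∉ S
  weight_t : lam t = 1
  lie_o_t : ⁅E o t, v⁆ = 0
  lie_t : ∀ m ∈ S, ⁅E t m, v⁆ = 0

namespace IsHookPrimitive

lemma ne_o (hv : IsHookPrimitive o t S lam v) {j : Fin n} (hj : j ∈ S) : j ≠ o :=
  fun h => hv.notMem (h ▸ hj)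

lemma ne_t (hv : IsHookPrimitive o t S lam v) {j : Fin n} (hj : j ∈ S) : j ≠ t :=
  fun h => hv.t_notMem (h ▸ hj)

lemma lie_E_o_t_lie_E_t_o (hv : IsHookPrimitive o t S lam v) :
    ⁅E o t, ⁅E t o, v⁆⁆ = (lam o - 1) • v := by
  rw [leibniz_lie, lie_E_E, if_pos rfl, if_pos rfl, hv.lie_o_t, lie_zero, add_zero, sub_lie,
    lie_E_self_of_mem hv.mem, lie_E_self_of_mem hv.mem, hv.weight_t, sub_smul, one_smul]

lemma lie_E_t_j_lie_E_j_o (hv : IsHookPrimitive o t S lam v) {j : Fin n} (hj : j ∈ S) :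
    ⁅E t j, ⁅E j o, v⁆⁆ = ⁅E t o, v⁆ := by
  rw [leibniz_lie, lie_E_E, if_pos rfl, if_neg hv.t_ne_o.symm, sub_zero, hv.lie_t j hj,
    lie_zero, add_zero]

lemma isPrimitive_erase (hv : IsHookPrimitive o t S lam v) (j : Fin n) :
    IsPrimitive o (S.erase j) (lam + Pi.single j 1 - Pi.single o 1)
      ⁅E j t, ⁅E t o, v⁆⁆ where
  mem := by
    convert lie_E_mem_glWtSp (lie_E_mem_glWtSp hv.mem t o) j t using 2
    abel
  notMem h := hv.notMem (Finset.mem_of_mem_erase h)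
  lie_raise m hm := by
    obtain ⟨hmj, hmS⟩ := Finset.mem_erase.mp hm
    have hinner : ⁅E o m, ⁅E t o, v⁆⁆ = 0 := by
      rw [leibniz_lie, lie_E_E, if_neg (hv.ne_t hmS), if_pos rfl, zero_sub, neg_lie,
        hv.lie_t m hmS, hv.lie_raise m hmS, lie_zero, neg_zero, zero_add]
    rw [leibniz_lie, lie_E_E, if_neg hmj, if_neg hv.t_ne_o, sub_zero, zero_lie, hinner,
      lie_zero, add_zero]
  lie_eq_zero m hm m' hm' hne := by
    obtain ⟨hmj, hmS⟩ := Finset.mem_erase.mp hm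
    obtain ⟨-, hm'S⟩ := Finset.mem_erase.mp hm'
    have hinner : ⁅E m' m, ⁅E t o, v⁆⁆ = 0 := by
      rw [leibniz_lie, lie_E_E, if_neg (hv.ne_t hmS), if_neg (hv.ne_o hm'S).symm, sub_zero,
        zero_lie, hv.lie_eq_zero m hmS m' hm'S hne, lie_zero, add_zero]
    rw [leibniz_lie, lie_E_E, if_neg hmj, if_neg (hv.ne_t hm'S).symm, sub_zero, zero_lie, hinner,
      lie_zero, add_zero]
  weight_eq_zero m hm := by
    obtain ⟨hmj, hmS⟩ := Finset.mem_erase.mp hm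
    simp [hmj, hv.ne_o hmS, hv.weight_eq_zero m hmS]

lemma lie_E_o_j_lie_E_j_t_lie_E_t_o (hv : IsHookPrimitive o t S lam v) {j : Fin n} (hj : j ∈ S) :
    ⁅E o j, ⁅E j t, ⁅E t o, v⁆⁆⁆ = (lam o - 1) • v := by
  have hinner : ⁅E o j, ⁅E t o, v⁆⁆ = 0 := by
    rw [leibniz_lie, lie_E_E, if_neg (hv.ne_t hj), if_pos rfl, zero_sub, neg_lie,
      hv.lie_t j hj, hv.lie_raise j hj, lie_zero, neg_zero, zero_add]
  rw [leibniz_lie, lie_E_E, if_pos rfl, if_neg hv.t_ne_o, sub_zero, hinner, lie_zero, add_zero,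
    hv.lie_E_o_t_lie_E_t_o]

lemma lie_E_t_j_lie_E_j_t_lie_E_t_o (hv : IsHookPrimitive o t S lam v) {j : Fin n} (hj : j ∈ S) :
    ⁅E t j, ⁅E j t, ⁅E t o, v⁆⁆⁆ = (2 : ℂ) • ⁅E t o, v⁆ := by
  have hz := lie_E_mem_glWtSp hv.mem t o
  have hkill : ⁅E t j, ⁅E t o, v⁆⁆ = 0 := by
    rw [leibniz_lie, lie_E_E, if_neg (hv.ne_t hj), if_neg hv.t_ne_o.symm, sub_zero, zero_lie,
      hv.lie_t j hj, lie_zero, add_zero]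
  rw [leibniz_lie, lie_E_E, if_pos rfl, if_pos rfl, hkill, lie_zero, add_zero, sub_lie,
    lie_E_self_of_mem hz, lie_E_self_of_mem hz, ← sub_smul]
  simp [hv.t_ne_o, hv.ne_t hj, hv.ne_o hj, hv.weight_t,
    hv.weight_eq_zero j hj, one_add_one_eq_two]

lemma lie_E_o_i_lie_E_j_o_lie_E_i_t_lie_E_t_o (hv : IsHookPrimitive o t S lam v)
    {i j : Fin n} (hi : i ∈ S) (hj : j ∈ S) (hij : i ≠ j) :
    ⁅E o i, ⁅E j o, ⁅E i t, ⁅E t o, v⁆⁆⁆⁆ =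
      (lam o - 1) • ⁅E j o, v⁆ - ⁅E j t, ⁅E t o, v⁆⁆ := by
  have hinner : ⁅E j i, ⁅E t o, v⁆⁆ = 0 := by
    rw [leibniz_lie, lie_E_E, if_neg (hv.ne_t hi), if_neg (hv.ne_o hj).symm, sub_zero, zero_lie,
      hv.lie_eq_zero i hi j hj hij.symm, lie_zero, add_zero]
  have hji : ⁅E j i, ⁅E i t, ⁅E t o, v⁆⁆⁆ = ⁅E j t, ⁅E t o, v⁆⁆ := by
    rw [leibniz_lie, lie_E_E, if_pos rfl, if_neg (hv.ne_t hj).symm, sub_zero, hinner, lie_zero,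
      add_zero]
  rw [leibniz_lie, lie_E_E, if_neg hij, if_pos rfl, zero_sub, neg_lie, hji,
    hv.lie_E_o_j_lie_E_j_t_lie_E_t_o hi, lie_smul]
  abel

end IsHookPrimitive

variable (o t S v) in
def hookVec : Option S → L
  | none => lowerProd o S v
  | some j => lowerProd o (S.erase j) ⁅E j t, ⁅E t o, v⁆⁆

variable (o t S) in
def hookDual : Option S → Module.End ℂ L
  | none => raiseProd o S
  | some j =>
    toEnd ℂ (glMat n) L (E o t) * toEnd ℂ (glMat n) L (E t j) * raiseProd o (S.erase j)

namespace IsHookPrimitive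

lemma hookDual_none_hookVec_none (hv : IsHookPrimitive o t S lam v) :
    hookDual o t S none (hookVec o t S v none) =
      (descPochhammer ℂ S.card).eval (lam o) • v := by
  simp [hookDual, hookVec, hv.raiseProd_lowerProd le_rfl le_rfl]

lemma hookDual_none_hookVec_some (hv : IsHookPrimitive o t S lam v) {j : Fin n} (hj : j ∈ S) :
    hookDual o t S none (hookVec o t S v (some ⟨j, hj⟩)) =
      ((lam o - 1) * (descPochhammer ℂ (S.erase j).card).eval (lam o - 1)) • v := by
  simp only [hookDual, hookVec]
  rw [raiseProd_apply_of_mem hj (hv.ne_o hj),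
    (hv.isPrimitive_erase j).raiseProd_lowerProd le_rfl le_rfl, Finset.sdiff_self, lie_smul,
    lowerProd_empty, Module.End.one_apply, hv.lie_E_o_j_lie_E_j_t_lie_E_t_o hj, smul_smul,
    mul_comm]
  simp [(hv.ne_o hj).symm]

lemma hookDual_some_hookVec_none (hv : IsHookPrimitive o t S lam v) {j : Fin n} (hj : j ∈ S) :
    hookDual o t S (some ⟨j, hj⟩) (hookVec o t S v none) =
      ((descPochhammer ℂ (S.erase j).card).eval (lam o - 1) * (lam o - 1)) • v := by
  simp only [hookDual, hookVec, Module.End.mul_apply, toEnd_apply_apply]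
  rw [hv.raiseProd_lowerProd le_rfl (Finset.erase_subset j S), Finset.sdiff_erase_self hj,
    lowerProd_singleton (hv.ne_o hj), lie_smul, lie_smul, hv.lie_E_t_j_lie_E_j_o hj,
    hv.lie_E_o_t_lie_E_t_o, smul_smul]
  simp

lemma hookDual_some_hookVec_self (hv : IsHookPrimitive o t S lam v) {j : Fin n} (hj : j ∈ S) :
    hookDual o t S (some ⟨j, hj⟩) (hookVec o t S v (some ⟨j, hj⟩)) =
      ((descPochhammer ℂ (S.erase j).card).eval (lam o - 1) * (2 * (lam o - 1))) • v := by
  simp only [hookDual, hookVec, Module.End.mul_apply, toEnd_apply_apply]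
  rw [(hv.isPrimitive_erase j).raiseProd_lowerProd le_rfl le_rfl, Finset.sdiff_self,
    lowerProd_empty, Module.End.one_apply, lie_smul, lie_smul,
    hv.lie_E_t_j_lie_E_j_t_lie_E_t_o hj, lie_smul,
    hv.lie_E_o_t_lie_E_t_o, smul_smul, smul_smul]
  simp [(hv.ne_o hj).symm, mul_assoc]

lemma hookDual_some_hookVec_some (hv : IsHookPrimitive o t S lam v) {i j : Fin n} (hi : i ∈ S)
    (hj : j ∈ S) (hij : i ≠ j) :
    hookDual o t S (some ⟨j, hj⟩) (hookVec o t S v (some ⟨i, hi⟩)) =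
      ((descPochhammer ℂ ((S.erase j).erase i).card).eval (lam o - 2) *
        ((lam o - 1) * (lam o - 3))) • v := by
  have hiS : i ∈ S.erase j := Finset.mem_erase.mpr ⟨hij, hi⟩
  have hsub : (S.erase j).erase i ⊆ S.erase i := by
    rw [Finset.erase_right_comm]
    exact Finset.erase_subset j _
  have hsd : S.erase i \ (S.erase j).erase i = {j} := by
    rw [Finset.erase_right_comm, Finset.sdiff_erase_self (Finset.mem_erase.mpr ⟨hij.symm, hj⟩)]
  have hE : ⁅E t j, (lam o - 1) • ⁅E j o, v⁆ - ⁅E j t, ⁅E t o, v⁆⁆⁆ =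
      (lam o - 3) • ⁅E t o, v⁆ := by
    rw [lie_sub, lie_smul, hv.lie_E_t_j_lie_E_j_o hj, hv.lie_E_t_j_lie_E_j_t_lie_E_t_o hj,
      ← sub_smul]
    ring_nf
  simp only [hookDual, hookVec, Module.End.mul_apply, toEnd_apply_apply]
  rw [raiseProd_apply_of_mem hiS (hv.ne_o hi),
    (hv.isPrimitive_erase i).raiseProd_lowerProd le_rfl hsub, hsd,
    lowerProd_singleton (hv.ne_o hj), lie_smul,
    hv.lie_E_o_i_lie_E_j_o_lie_E_i_t_lie_E_t_o hi hj hij, lie_smul,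
    hE, lie_smul, lie_smul, hv.lie_E_o_t_lie_E_t_o, smul_smul, smul_smul]
  congr 1
  simp [(hv.ne_o hi).symm, sub_sub, one_add_one_eq_two]
  ring

lemma hookVec_mem_glWtSp (hv : IsHookPrimitive o t S lam v) (b : Option S) :
    hookVec o t S v b ∈
      glWtSp n L (lam + ∑ a ∈ S, Pi.single a 1 - (S.card : ℂ) • Pi.single o 1) := by
  rcases b with _ | ⟨j, hj⟩
  · exact lowerProd_mem_glWtSp hv.notMem hv.mem
  · show lowerProd o (S.erase j) _ ∈ _
    convert lowerProd_mem_glWtSp (hv.isPrimitive_erase j).notMem (hv.isPrimitive_erase j).mem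
      using 2
    rw [← Finset.add_sum_erase S _ hj, ← Finset.card_erase_add_one hj]
    push_cast
    module

lemma hookDual_hookVec (hv : IsHookPrimitive o t S lam v) {N : ℕ} (hS : S.card = N + 1)
    (b b' : Option S) :
    hookDual o t S b (hookVec o t S v b') =
      ((descPochhammer ℂ N).eval (lam o - 1) * hookMatrix S (lam o) b b') • v := by
  have hcard {j : Fin n} (hj : j ∈ S) : (S.erase j).card = N := by
    rw [Finset.card_erase_of_mem hj, hS, Nat.add_sub_cancel]
  rcases b with _ | ⟨j, hj⟩ <;> rcases b' with _ | ⟨i, hi⟩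
  · rw [hv.hookDual_none_hookVec_none, hS, descPochhammer_succ_eval_left]
    simp [hookMatrix, mul_comm]
  · rw [hv.hookDual_none_hookVec_some hi, hcard hi]
    simp [hookMatrix, mul_comm]
  · rw [hv.hookDual_some_hookVec_none hj, hcard hj]
    simp [hookMatrix]
  · by_cases hij : i = j
    · subst hij
      rw [hv.hookDual_some_hookVec_self hi, hcard hi]
      simp [hookMatrix]
    · obtain ⟨N', rfl⟩ : ∃ N', N = N' + 1 := Nat.exists_eq_add_one.mpr <| by
        have := Finset.one_lt_card.mpr ⟨i, hi, j, hj, hij⟩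
        omega
      have hcard' : ((S.erase j).erase i).card = N' := by
        rw [Finset.card_erase_of_mem (Finset.mem_erase.mpr ⟨hij, hi⟩), hcard hj,
          Nat.add_sub_cancel]
      rw [hv.hookDual_some_hookVec_some hi hj hij, hcard', descPochhammer_succ_eval_left]
      have hne : (⟨i, hi⟩ : S) ≠ ⟨j, hj⟩ := fun h => hij (congrArg Subtype.val h)
      simp only [hookMatrix, Matrix.of_apply, if_neg hne]
      ring_nf

open Matrix in
theorem card_add_one_le_maxMult [FiniteDimensional ℂ L] (hv : IsHookPrimitive o t S lam v)
    (hv0 : v ≠ 0) {x : ℕ} (hx : lam o = x) (hS : S.Nonempty) (hSx : S.card < x) :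
    S.card + 1 ≤ maxMult n L := by
  obtain ⟨N, hN⟩ : ∃ N, S.card = N + 1 := Nat.exists_eq_add_one.mpr hS.card_pos
  have hc : (descPochhammer ℂ N).eval (lam o - 1) ≠ 0 := by
    rw [hx, ← Nat.cast_pred (by omega), descPochhammer_eval_eq_descFactorial, Nat.cast_ne_zero,
      ne_eq, Nat.descFactorial_eq_zero_iff_lt]
    omega
  have hM : ∀ g, ((descPochhammer ℂ N).eval (lam o - 1) • hookMatrix S (lam o)) *ᵥ g = 0 →
      g = 0 := by
    intro g hg
    rw [smul_mulVec, smul_eq_zero] at hg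
    refine hookMatrix_mulVec_eq_zero ?_ ?_ ?_ (hg.resolve_left hc) <;>
      simp only [hx, Fintype.card_coe] <;> norm_cast <;> omega
  have hli := linearIndependent_of_apply_eq_smul (φ := hookDual o t S) hv0 hM fun b b' => by
    rw [hv.hookDual_hookVec hN]; rfl
  simpa using le_maxMult_of_linearIndependent hli hv.hookVec_mem_glWtSp

end IsHookPrimitive

lemma isHookPrimitive_of_isHWVector [FiniteDimensional ℂ L] (hv : IsHWVector n L lam v)
    (hot : o < t) (htS : ∀ m ∈ S, t < m) (hlam_t : lam t = 1) (hlam : ∀ m ∈ S, lam m = 0) :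
    IsHookPrimitive o t S lam v where
  mem := hv.1
  notMem h := (hot.trans (htS o h)).false
  lie_raise m hm := hv.2 o m (hot.trans (htS m hm))
  lie_eq_zero m hm m' hm' hne := by
    rcases hne.lt_or_gt with h | h
    · exact hv.2 m' m h
    · exact lie_E_eq_zero_of_lie_E_swap_eq_zero hv.1 h.ne (by rw [hlam m hm, hlam m' hm'])
        (hv.2 m m' h)
  weight_eq_zero := hlam
  t_ne_o := hot.ne'
  t_notMem h := (htS t h).false
  weight_t := hlam_t
  lie_o_t := hv.2 o t hot
  lie_t m hm := hv.2 t m (htS m hm)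

end Hook

end GlMat

open GlMat in
/-- for integers `x, ℓ ≥ 2`, the maximal weight multiplicity of the simple
finite-dimensional `gl(ℓ+1, ℂ)`-module with highest weight `(x, 1, 0^{(ℓ-1)})` satisfies
`d((x,1,0^{(ℓ-1)})) ≥ min {x, ℓ}`. -/
theorem deg_x_one_zeros (x l : ℕ) (hx : 2 ≤ x) (hl : 2 ≤ l)
    (L : Type) [AddCommGroup L] [Module ℂ L] [LieRingModule (glMat (l + 1)) L]
    [LieModule ℂ (glMat (l + 1)) L]
    (hL : IsSimpleFDHW (l + 1) L
      (fun i => if (i : ℕ) = 0 then (x : ℂ) else if (i : ℕ) = 1 then 1 else 0)) :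
    min x l ≤ maxMult (l + 1) L := by
  obtain ⟨-, hfd, v, hv0, hv⟩ := hL
  let S : Finset (Fin (l + 1)) :=
    (Finset.Icc 2 (min x l)).attachFin fun m hm => by simp at hm; omega
  have hS : S.card = min x l - 1 := by simp [S]
  have hmemS (m : Fin (l + 1)) (hm : m ∈ S) : 2 ≤ (m : ℕ) := by simp_all [S]
  have hhook := isHookPrimitive_of_isHWVector (o := ⟨0, by omega⟩) (t := ⟨1, by omega⟩) hv
    (Fin.mk_lt_mk.mpr one_pos) (fun m hm => Fin.mk_lt_of_lt_val (by have := hmemS m hm; omega))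
    rfl fun m hm => by
      have := hmemS m hm
      rw [if_neg (by omega), if_neg (by omega)]
  have := hhook.card_add_one_le_maxMult hv0 rfl
    (Finset.card_pos.mp (by omega)) (by omega)
  omega
end
end

section
/- Let k ≥ 2 and let (λ₁,…,λ_k) be a dominant integral gl(k,ℂ)-weight with λ₁ ≥ 2 and λ_k > 0. Then for every positive integer ℓ, the maximal weight multiplicity of the simple finite-dimensional gl(k+ℓ,ℂ)-module with highest weight (λ₁,…,λ_k,0^{(ℓ)}) satisfies d((λ₁,…,λ_k,0^{(ℓ)})) ≥ min{λ₁, ℓ}. -/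
set_option maxHeartbeats 1000000
set_option synthInstance.maxHeartbeats 100000

noncomputable section

attribute [local instance 100] LieRing.ofAssociativeRing

/-!
Let `v` be a highest weight vector of weight `ν = (λ, 0^{(ℓ)})`, write `i₀ = 1`, `i₁ = k`, and
let `T` be a set of `r = min(λ₁, ℓ)` padding indices. The `r` vectors
`x_j = E_{j,i₁} ∏_{t ∈ T ∖ {j}} E_{t,i₀} v` (`j ∈ T`) have a common weight, and they are linearly
independent: applying the raising operator `E_{i₀,t}` (`t ∈ T`) to a relation `∑ c_j x_j = 0` gives
the relation `∑_{j ≠ t} (β c_j - c_t) x'_j = 0` between the analogous vectors for `T ∖ {t}`, where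
`β = λ₁ + 2 - |T| ≥ 2`. By induction on `|T|`, `β c_j = c_t` for all `j ≠ t` in `T`, and two such
equations give `(β² - 1) c_j = 0`. The induction starts from `E_{j,i₁} v ≠ 0`, which holds because
`λ_k ≠ 0`. Besides the highest weight conditions, the computation uses `E_{s,t} v = 0` for padding
indices `s > t`; this follows from `sl₂`-theory, since `ν_s = ν_t`.
-/

theorem LieModule.commute_toEnd_of_lie_eq_zero {R L M : Type*} [CommRing R] [LieRing L]
    [LieAlgebra R L] [AddCommGroup M] [Module R M] [LieRingModule L M] [LieModule R L M]
    {x y : L} (h : ⁅x, y⁆ = 0) : Commute (LieModule.toEnd R L M x) (LieModule.toEnd R L M y) := by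
  rw [commute_iff_lie_eq, ← LieHom.map_lie, h, map_zero]

theorem LinearIndepOn.card_le_finrank_of_forall_mem {K V ι : Type*} [DivisionRing K]
    [AddCommGroup V] [Module K V] {W : Submodule K V} [Module.Finite K W] {x : ι → V}
    {s : Finset ι} (hx : LinearIndepOn K x s) (hW : ∀ i ∈ s, x i ∈ W) :
    s.card ≤ Module.finrank K W := by
  have hspan := finrank_span_eq_card (R := K) (b := fun i : s => x i) hx
  rw [Fintype.card_coe] at hspan
  rw [← hspan]
  exact Submodule.finrank_mono (Submodule.span_le.2 (by rintro _ ⟨i, rfl⟩; exact hW i i.2))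

theorem Finset.sum_single_sub_single_apply {ι R : Type*} [DecidableEq ι] [Ring R]
    (S : Finset ι) (i₀ p : ι) :
    (∑ u ∈ S, (Pi.single u 1 - Pi.single i₀ 1) : ι → R) p =
      (if p ∈ S then 1 else 0) - if p = i₀ then (S.card : R) else 0 := by
  simp [Finset.sum_apply, Pi.single_apply, Finset.sum_sub_distrib]

namespace GlWeight

open Finset

section MatrixUnits

variable {m : ℕ}

def E (i j : Fin m) : glMat m := Matrix.single i j 1

theorem E_lie_E (i j p q : Fin m) :
    ⁅E i j, E p q⁆ = (if j = p then E i q else 0) - (if q = i then E p j else 0) := by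
  rw [Ring.lie_def]
  by_cases hjp : j = p <;> by_cases hqi : q = i <;>
    simp [E, hjp, hqi, Matrix.single_mul_single_same, Matrix.single_mul_single_of_ne]

theorem E_lie_E_of_ne {i j p q : Fin m} (hjp : j ≠ p) (hqi : q ≠ i) : ⁅E i j, E p q⁆ = 0 := by
  simp [E_lie_E, hjp, hqi]

theorem E_lie_E_left {i j q : Fin m} (hqi : q ≠ i) : ⁅E i j, E j q⁆ = E i q := by
  simp [E_lie_E, hqi]

theorem E_lie_E_right {i j p : Fin m} (hjp : j ≠ p) : ⁅E i j, E p i⁆ = -E p j := by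
  simp [E_lie_E, hjp]

theorem E_lie_E_swap (i j : Fin m) : ⁅E i j, E j i⁆ = E i i - E j j := by
  simp [E_lie_E]

theorem E_self (p : Fin m) : E p p = Matrix.diagonal (Pi.single p 1) := by
  rw [E, Matrix.diagonal_single]

theorem diagonal_lie_E (d : Fin m → ℂ) (p q : Fin m) :
    ⁅(Matrix.diagonal d : glMat m), E p q⁆ = (d p - d q) • E p q := by
  ext a b
  simp only [Ring.lie_def, E, Matrix.sub_apply, Matrix.diagonal_mul, Matrix.mul_diagonal,
    Matrix.smul_apply, Matrix.single_apply, smul_eq_mul]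
  split_ifs <;> simp_all

theorem isSl2Triple_E {i j : Fin m} (hij : i ≠ j) :
    IsSl2Triple (E i i - E j j) (E i j) (E j i) where
  h_ne_zero h := by
    have := congrFun (congrFun h i) i
    simp [E, hij.symm] at this
  lie_e_f := E_lie_E_swap i j
  lie_h_e_nsmul := by
    rw [sub_lie, E_lie_E_left hij.symm, E_lie_E_right hij.symm, two_nsmul, sub_neg_eq_add]
  lie_h_f_nsmul := by rw [sub_lie, E_lie_E_right hij, E_lie_E_left hij, two_nsmul, neg_add]; abel

end MatrixUnits

section WeightVectors

variable {m : ℕ} {M : Type} [AddCommGroup M] [Module ℂ M]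
  [LieRingModule (glMat m) M] [LieModule ℂ (glMat m) M] {σ : Fin m → ℂ} {w : M}

theorem E_self_lie_of_mem_glWtSp (hw : w ∈ glWtSp m M σ) (p : Fin m) :
    ⁅E p p, w⁆ = σ p • w := by
  rw [E_self, hw]
  simp [Pi.single_apply]

theorem E_lie_mem_glWtSp (hw : w ∈ glWtSp m M σ) (p q : Fin m) :
    ⁅E p q, w⁆ ∈ glWtSp m M (σ + Pi.single p 1 - Pi.single q 1) := by
  intro d
  have hsum : ∑ i, d i * (σ + Pi.single p 1 - Pi.single q 1 : Fin m → ℂ) i =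
      d p - d q + ∑ i, d i * σ i := by
    simp only [Pi.sub_apply, Pi.add_apply, Pi.single_apply, mul_sub, mul_add, mul_ite, mul_one,
      mul_zero, sum_sub_distrib, sum_add_distrib, sum_ite_eq', mem_univ, if_true]
    ring
  rw [leibniz_lie, diagonal_lie_E, hw d, smul_lie, lie_smul, hsum, add_smul]

theorem E_lie_eq_zero_of_E_swap_lie_eq_zero [FiniteDimensional ℂ M] {i j : Fin m} (hij : i ≠ j)
    (hw : w ∈ glWtSp m M σ) (hσ : σ i = σ j) (he : ⁅E i j, w⁆ = 0) : ⁅E j i, w⁆ = 0 := by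
  rcases eq_or_ne w 0 with rfl | hw0
  · exact lie_zero _
  have hprim : (isSl2Triple_E hij).HasPrimitiveVectorWith w (0 : ℂ) :=
    ⟨hw0, by rw [sub_lie, E_self_lie_of_mem_glWtSp hw, E_self_lie_of_mem_glWtSp hw, hσ, sub_self,
      zero_smul], he⟩
  simpa using hprim.pow_toEnd_f_eq_zero_of_eq_nat (n := 0) (by simp)

theorem IsHWVector.E_lie_eq_zero_of_eq [FiniteDimensional ℂ M] {s t : Fin m}
    (hw : IsHWVector m M σ w) (hst : s ≠ t) (hσ : σ s = σ t) : ⁅E s t, w⁆ = 0 := by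
  rcases lt_or_gt_of_ne hst with hlt | hgt
  · exact hw.2 s t hlt
  · exact E_lie_eq_zero_of_E_swap_lie_eq_zero hst.symm hw.1 hσ.symm (hw.2 t s hgt)

theorem E_lie_ne_zero_of_E_swap_lie_eq_zero {i j : Fin m} (hw : w ∈ glWtSp m M σ) (hw0 : w ≠ 0)
    (hσ : σ i ≠ σ j) (h : ⁅E j i, w⁆ = 0) : ⁅E i j, w⁆ ≠ 0 := by
  intro h'
  have hzero := congrArg (⁅E j i, ·⁆) h'
  simp only [leibniz_lie, E_lie_E_swap, sub_lie, E_self_lie_of_mem_glWtSp hw, h, lie_zero,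
    add_zero, ← sub_smul] at hzero
  exact hw0 ((smul_eq_zero.1 hzero).resolve_left (sub_ne_zero.2 hσ.symm))

theorem finrank_glWtSp_le_maxMult [FiniteDimensional ℂ M] (μ : Fin m → ℂ) :
    Module.finrank ℂ (glWtSp m M μ) ≤ maxMult m M :=
  le_csSup ⟨Module.finrank ℂ M, by rintro _ ⟨μ', rfl⟩; exact Submodule.finrank_le _⟩ ⟨μ, rfl⟩

end WeightVectors

section LoweringProducts

variable {m : ℕ} {M : Type} [AddCommGroup M] [Module ℂ M]
  [LieRingModule (glMat m) M] [LieModule ℂ (glMat m) M] {σ : Fin m → ℂ} {w : M}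
  {i₀ i₁ t : Fin m} {S : Finset (Fin m)}

/-- `∏_{t ∈ S} E_{t,i₀}`. The index `i₀` is erased only so that the factors provably commute;
the lemmas below assume `i₀ ∉ S`. -/
def lowerProd (i₀ : Fin m) (S : Finset (Fin m)) : Module.End ℂ M :=
  (S.erase i₀).noncommProd (fun t => LieModule.toEnd ℂ (glMat m) M (E t i₀))
    fun _ hs _ ht _ => LieModule.commute_toEnd_of_lie_eq_zero
      (E_lie_E_of_ne (ne_of_mem_erase ht).symm (ne_of_mem_erase hs).symm)

theorem lowerProd_empty_apply (i₀ : Fin m) (w : M) : lowerProd i₀ ∅ w = w := by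
  simp [lowerProd]

theorem lowerProd_insert_apply (ht : t ≠ i₀) (htS : t ∉ S) (w : M) :
    lowerProd i₀ (insert t S) w = ⁅E t i₀, lowerProd i₀ S w⁆ := by
  simp only [lowerProd, erase_insert_of_ne ht]
  rw [noncommProd_insert_of_notMem _ _ _ _ fun h => htS (mem_of_mem_erase h)]
  rfl

theorem lowerProd_apply_of_mem (hS : i₀ ∉ S) (ht : t ∈ S) (w : M) :
    lowerProd i₀ S w = ⁅E t i₀, lowerProd i₀ (S.erase t) w⁆ := by
  conv_lhs => rw [← insert_erase ht]
  exact lowerProd_insert_apply (ne_of_mem_of_not_mem ht hS) (notMem_erase t S) w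

theorem lie_lowerProd_of_lie_E_eq_zero {X : glMat m} (hX : ∀ u ∈ S, ⁅X, E u i₀⁆ = 0) (w : M) :
    ⁅X, lowerProd i₀ S w⁆ = lowerProd i₀ S ⁅X, w⁆ :=
  LinearMap.congr_fun (noncommProd_commute _ _ _ _ fun u hu =>
    LieModule.commute_toEnd_of_lie_eq_zero (hX u (mem_of_mem_erase hu))) w

theorem lowerProd_mem_glWtSp (hw : w ∈ glWtSp m M σ) (hS : i₀ ∉ S) :
    lowerProd i₀ S w ∈ glWtSp m M (σ + ∑ t ∈ S, (Pi.single t 1 - Pi.single i₀ 1)) := by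
  induction S using Finset.induction_on with
  | empty => simpa [lowerProd_empty_apply] using hw
  | insert t S htS ih =>
    rw [mem_insert, not_or] at hS
    rw [lowerProd_insert_apply (Ne.symm hS.1) htS, sum_insert htS]
    convert E_lie_mem_glWtSp (ih hS.2) t i₀ using 2
    abel

theorem E_lie_lowerProd_of_notMem (htS : t ∉ S) (hS : i₀ ∉ S) (h₀ : ⁅E i₀ t, w⁆ = 0)
    (hSw : ∀ u ∈ S, ⁅E u t, w⁆ = 0) : ⁅E i₀ t, lowerProd i₀ S w⁆ = 0 := by
  induction S using Finset.induction_on with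
  | empty => rwa [lowerProd_empty_apply]
  | insert u S huS ih =>
    rw [mem_insert, not_or] at htS hS
    have hcomm : ∀ s ∈ S, ⁅E u t, E s i₀⁆ = 0 := fun s hs =>
      E_lie_E_of_ne (ne_of_mem_of_not_mem hs htS.2).symm hS.1
    rw [lowerProd_insert_apply (Ne.symm hS.1) huS, leibniz_lie, E_lie_E_right htS.1, neg_lie,
      lie_lowerProd_of_lie_E_eq_zero hcomm, hSw u (mem_insert_self u S), map_zero,
      ih htS.2 hS.2 fun s hs => hSw s (mem_insert_of_mem hs), lie_zero, neg_zero, add_zero]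

theorem E_lie_lowerProd_of_mem (hw : w ∈ glWtSp m M σ) (ht : t ∈ S) (hS : i₀ ∉ S)
    (h₀ : ⁅E i₀ t, w⁆ = 0) (hSw : ∀ u ∈ S, u ≠ t → ⁅E u t, w⁆ = 0) :
    ⁅E i₀ t, lowerProd i₀ S w⁆ = (σ i₀ - σ t + 1 - #S) • lowerProd i₀ (S.erase t) w := by
  have hti : t ≠ i₀ := ne_of_mem_of_not_mem ht hS
  have hS' : i₀ ∉ S.erase t := fun h => hS (mem_of_mem_erase h)
  have hwt := lowerProd_mem_glWtSp hw hS'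
  rw [lowerProd_apply_of_mem hS ht, leibniz_lie, E_lie_E_swap, sub_lie,
    E_lie_lowerProd_of_notMem (notMem_erase t S) hS' h₀
      fun u hu => hSw u (mem_of_mem_erase hu) (ne_of_mem_erase hu),
    lie_zero, add_zero, E_self_lie_of_mem_glWtSp hwt, E_self_lie_of_mem_glWtSp hwt, ← sub_smul]
  congr 1
  simp only [Pi.add_apply, sum_single_sub_single_apply, if_neg hS', if_neg hti,
    notMem_erase t S, if_false, if_true]
  rw [card_erase_of_mem ht, Nat.cast_sub (card_pos.2 ⟨t, ht⟩)]
  ring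

theorem E_lie_lowerProd_eq_neg_sum (hS : i₀ ∉ S) (h₁S : i₁ ∉ S) (h : ⁅E i₀ i₁, w⁆ = 0) :
    ⁅E i₀ i₁, lowerProd i₀ S w⁆ = -∑ s ∈ S, ⁅E s i₁, lowerProd i₀ (S.erase s) w⁆ := by
  induction S using Finset.induction_on with
  | empty => simpa [lowerProd_empty_apply]
  | insert u S huS ih =>
    rw [mem_insert, not_or] at hS h₁S
    have hterm : ∀ s ∈ S, ⁅E u i₀, ⁅E s i₁, lowerProd i₀ (S.erase s) w⁆⁆ =
        ⁅E s i₁, lowerProd i₀ ((insert u S).erase s) w⁆ := fun s hs => by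
      rw [erase_insert_of_ne (ne_of_mem_of_not_mem hs huS).symm,
        lowerProd_insert_apply (Ne.symm hS.1) fun h => huS (mem_of_mem_erase h),
        leibniz_lie, E_lie_E_of_ne (ne_of_mem_of_not_mem hs hS.2).symm h₁S.1, zero_lie, zero_add]
    rw [lowerProd_insert_apply (Ne.symm hS.1) huS, leibniz_lie, E_lie_E_right h₁S.1,
      neg_lie, ih hS.2 h₁S.2, lie_neg, lie_sum, sum_congr rfl hterm, sum_insert huS,
      erase_insert huS]
    abel

end LoweringProducts

section LowerVectors

variable {m : ℕ} {M : Type} [AddCommGroup M] [Module ℂ M]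
  [LieRingModule (glMat m) M] [LieModule ℂ (glMat m) M] {σ : Fin m → ℂ} {w : M}
  {i₀ i₁ t j : Fin m} {T : Finset (Fin m)}

def lowerVec (i₀ i₁ : Fin m) (T : Finset (Fin m)) (w : M) (j : Fin m) : M :=
  ⁅E j i₁, lowerProd i₀ (T.erase j) w⁆

theorem lowerVec_mem_glWtSp (hw : w ∈ glWtSp m M σ) (hT : i₀ ∉ T) (hj : j ∈ T) :
    lowerVec i₀ i₁ T w j ∈ glWtSp m M
      (σ + ∑ t ∈ T, (Pi.single t 1 - Pi.single i₀ 1) + Pi.single i₀ 1 - Pi.single i₁ 1) := by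
  rw [lowerVec]
  convert E_lie_mem_glWtSp (lowerProd_mem_glWtSp hw fun h => hT (mem_of_mem_erase h)) j i₁
    using 2
  rw [← sum_erase_add _ _ hj]
  abel

theorem E_lie_lowerVec_self (hT₀ : i₀ ∉ T) (hT₁ : i₁ ∉ T) (h₀₁ : i₀ ≠ i₁)
    (hw₀₁ : ⁅E i₀ i₁, w⁆ = 0) (hw₀ : ⁅E i₀ t, w⁆ = 0) (hwT : ∀ u ∈ T, u ≠ t → ⁅E u t, w⁆ = 0) :
    ⁅E i₀ t, lowerVec i₀ i₁ T w t⁆ = -∑ s ∈ T.erase t, lowerVec i₀ i₁ (T.erase t) w s := by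
  have hT₀' : i₀ ∉ T.erase t := fun h => hT₀ (mem_of_mem_erase h)
  rw [lowerVec, leibniz_lie, E_lie_E_left h₀₁.symm,
    E_lie_lowerProd_of_notMem (notMem_erase t T) hT₀' hw₀
      fun u hu => hwT u (mem_of_mem_erase hu) (ne_of_mem_erase hu),
    lie_zero, add_zero, E_lie_lowerProd_eq_neg_sum hT₀' (fun h => hT₁ (mem_of_mem_erase h)) hw₀₁]
  rfl

theorem E_lie_lowerVec_of_ne (hw : w ∈ glWtSp m M σ) (hj : j ∈ T) (ht : t ∈ T) (hjt : j ≠ t)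
    (hT₀ : i₀ ∉ T) (h₀₁ : i₀ ≠ i₁) (hw₀ : ⁅E i₀ t, w⁆ = 0)
    (hwT : ∀ u ∈ T, u ≠ t → ⁅E u t, w⁆ = 0) :
    ⁅E i₀ t, lowerVec i₀ i₁ T w j⁆ = (σ i₀ - σ t + 2 - #T) • lowerVec i₀ i₁ (T.erase t) w j := by
  rw [lowerVec, leibniz_lie, E_lie_E_of_ne hjt.symm h₀₁.symm, zero_lie, zero_add,
    E_lie_lowerProd_of_mem hw (mem_erase.2 ⟨hjt.symm, ht⟩) (fun h => hT₀ (mem_of_mem_erase h)) hw₀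
      fun u hu hut => hwT u (mem_of_mem_erase hu) hut,
    lie_smul, erase_right_comm, card_erase_of_mem hj, Nat.cast_sub (card_pos.2 ⟨j, hj⟩)]
  congr 1
  ring

theorem E_lie_sum_lowerVec (hw : w ∈ glWtSp m M σ) (ht : t ∈ T) (hT₀ : i₀ ∉ T) (hT₁ : i₁ ∉ T)
    (h₀₁ : i₀ ≠ i₁) (hw₀₁ : ⁅E i₀ i₁, w⁆ = 0) (hw₀ : ⁅E i₀ t, w⁆ = 0)
    (hwT : ∀ u ∈ T, u ≠ t → ⁅E u t, w⁆ = 0) (c : Fin m → ℂ) :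
    ⁅E i₀ t, ∑ j ∈ T, c j • lowerVec i₀ i₁ T w j⁆ =
      ∑ j ∈ T.erase t, ((σ i₀ - σ t + 2 - #T) * c j - c t) • lowerVec i₀ i₁ (T.erase t) w j := by
  have hne : ∀ j ∈ T.erase t, ⁅E i₀ t, c j • lowerVec i₀ i₁ T w j⁆ =
      ((σ i₀ - σ t + 2 - #T) * c j) • lowerVec i₀ i₁ (T.erase t) w j := fun j hj => by
    rw [lie_smul, E_lie_lowerVec_of_ne hw (mem_of_mem_erase hj) ht (ne_of_mem_erase hj) hT₀ h₀₁
      hw₀ hwT, smul_smul, mul_comm]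
  rw [lie_sum, ← add_sum_erase _ _ ht, sum_congr rfl hne, lie_smul,
    E_lie_lowerVec_self hT₀ hT₁ h₀₁ hw₀₁ hw₀ hwT]
  simp only [sub_smul, sum_sub_distrib, smul_neg, smul_sum]
  abel

theorem linearIndepOn_lowerVec {P : Finset (Fin m)} {N : ℕ} (hw : w ∈ glWtSp m M σ) (hw0 : w ≠ 0)
    (h₀₁ : i₀ ≠ i₁) (hP₀ : i₀ ∉ P) (hP₁ : i₁ ∉ P)
    (hσ₀ : ∀ t ∈ P, σ i₀ - σ t = N) (hσ₁ : ∀ t ∈ P, σ t ≠ σ i₁)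
    (hw₀₁ : ⁅E i₀ i₁, w⁆ = 0) (hw₀ : ∀ t ∈ P, ⁅E i₀ t, w⁆ = 0) (hw₁ : ∀ t ∈ P, ⁅E i₁ t, w⁆ = 0)
    (hwP : ∀ s ∈ P, ∀ t ∈ P, s ≠ t → ⁅E s t, w⁆ = 0) (hTP : T ⊆ P) (hTN : #T ≤ N) :
    LinearIndepOn ℂ (lowerVec i₀ i₁ T w) T := by
  induction T using Finset.strongInduction with
  | H T ih =>
    rw [linearIndepOn_finset_iff]
    intro c hc j hj
    have hrel : ∀ t ∈ T, ∀ s ∈ T, s ≠ t → ((N : ℂ) + 2 - #T) * c s = c t := by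
      intro t ht s hs hst
      have hlow := congrArg (⁅E i₀ t, ·⁆) hc
      simp only [lie_zero] at hlow
      rw [E_lie_sum_lowerVec hw ht (fun h => hP₀ (hTP h)) (fun h => hP₁ (hTP h)) h₀₁ hw₀₁
        (hw₀ t (hTP ht)) (fun u hu hut => hwP u (hTP hu) t (hTP ht) hut), hσ₀ t (hTP ht)] at hlow
      have hTt : #(T.erase t) ≤ N := (card_erase_le).trans hTN
      exact sub_eq_zero.1 <| linearIndepOn_finset_iff.1
        (ih _ (erase_ssubset ht) ((erase_subset t T).trans hTP) hTt) _ hlow s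
        (mem_erase.2 ⟨hst, hs⟩)
    by_cases hsingle : ∃ u ∈ T, u ≠ j
    · obtain ⟨u, hu, huj⟩ := hsingle
      have hβ : ((N : ℂ) + 2 - #T) * (N + 2 - #T) ≠ 1 := by
        rw [show ((N : ℂ) + 2 - #T) = ((N - #T + 2 : ℕ) : ℂ) by push_cast [Nat.cast_sub hTN]; ring,
          ← Nat.cast_mul, Ne, Nat.cast_eq_one]
        nlinarith
      have hcj : (((N : ℂ) + 2 - #T) * (N + 2 - #T) - 1) * c j = 0 := by
        linear_combination ((N : ℂ) + 2 - #T) * hrel u hu j hj huj.symm + hrel j hj u hu huj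
      exact (mul_eq_zero.1 hcj).resolve_left (sub_ne_zero.2 hβ)
    · push Not at hsingle
      obtain rfl : T = {j} := eq_singleton_iff_unique_mem.2 ⟨hj, hsingle⟩
      rw [sum_singleton, lowerVec, erase_singleton, lowerProd_empty_apply] at hc
      exact (smul_eq_zero.1 hc).resolve_right <| E_lie_ne_zero_of_E_swap_lie_eq_zero hw hw0
        (hσ₁ j (hTP hj)) (hw₁ j (hTP hj))

end LowerVectors

end GlWeight

open GlWeight Finset in
/-- let `k ≥ 2` and let `(λ₁,…,λ_k)` be a dominant integral `gl(k)`-weight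
with `λ₁ ≥ 2` and `λ_k > 0`.  Then for every positive integer `ℓ`,
`d((λ₁,…,λ_k,0^{(ℓ)})) ≥ min {λ₁, ℓ}`. -/
theorem deg_padded_partition (k : ℕ) (hk : 2 ≤ k) (lam : Fin k → ℤ)
    (hpos : ∀ (h : 0 < k), 2 ≤ lam ⟨0, h⟩ ∧ 0 < lam ⟨k - 1, by omega⟩)
    (l : ℕ)
    (L : Type) [AddCommGroup L] [Module ℂ L] [LieRingModule (glMat (k + l)) L]
    [LieModule ℂ (glMat (k + l)) L]
    (hL : IsSimpleFDHW (k + l) L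
      (fun i => if h : (i : ℕ) < k then (lam ⟨(i : ℕ), h⟩ : ℂ) else 0)) :
    min (lam ⟨0, by omega⟩) (l : ℤ) ≤ (maxMult (k + l) L : ℤ) := by
  set ν : Fin (k + l) → ℂ := fun i => if h : (i : ℕ) < k then (lam ⟨(i : ℕ), h⟩ : ℂ) else 0
  obtain ⟨-, _, v, hv0, hv⟩ := hL
  obtain ⟨hlam₀, hlam₁⟩ := hpos (by omega)
  obtain ⟨N, hN⟩ := Int.eq_ofNat_of_zero_le (a := lam ⟨0, _⟩) (by omega)
  let i₀ : Fin (k + l) := ⟨0, by omega⟩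
  let i₁ : Fin (k + l) := ⟨k - 1, by omega⟩
  let P : Finset (Fin (k + l)) := univ.map (Fin.natAddEmb k)
  have hP : ∀ t ∈ P, k ≤ (t : ℕ) := by simp [P]
  have hνP : ∀ t ∈ P, ν t = 0 := fun t ht => dif_neg (by have := hP t ht; omega)
  have hlt : ∀ i : Fin (k + l), (i : ℕ) < k → ∀ t ∈ P, i < t := fun i hi t ht =>
    Fin.lt_def.2 (by have := hP t ht; omega)
  have hi₀P : i₀ ∉ P := fun h => lt_irrefl _ (hlt i₀ (show 0 < k by omega) i₀ h)
  have hi₁P : i₁ ∉ P := fun h => lt_irrefl _ (hlt i₁ (show k - 1 < k by omega) i₁ h)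
  obtain ⟨T, hTP, hT⟩ := exists_subset_card_eq (s := P) (n := min N l) (by simp [P])
  have hind := linearIndepOn_lowerVec hv.1 hv0 (Fin.ne_of_val_ne (show 0 ≠ k - 1 by omega))
    hi₀P hi₁P (fun t ht => by simp [hνP t ht, ν, i₀, hN, show 0 < k by omega])
    (fun t ht => by
      rw [hνP t ht, ne_comm]
      simp only [ν, i₁, show k - 1 < k by omega, dif_pos, ne_eq, Int.cast_eq_zero]
      omega)
    (hv.2 i₀ i₁ (Fin.lt_def.2 (show 0 < k - 1 by omega)))
    (fun t => hv.2 i₀ t ∘ hlt i₀ (show 0 < k by omega) t)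
    (fun t => hv.2 i₁ t ∘ hlt i₁ (show k - 1 < k by omega) t)
    (fun s hs t ht hst => hv.E_lie_eq_zero_of_eq hst ((hνP s hs).trans (hνP t ht).symm))
    hTP (hT ▸ min_le_left _ _)
  calc min (lam ⟨0, by omega⟩) (l : ℤ) = (#T : ℤ) := by rw [hN, hT]; omega
    _ ≤ Module.finrank ℂ (glWtSp (k + l) L _) := by
        exact_mod_cast hind.card_le_finrank_of_forall_mem fun j hj =>
          lowerVec_mem_glWtSp hv.1 (fun h => hi₀P (hTP h)) hj
    _ ≤ maxMult (k + l) L := by exact_mod_cast finrank_glWtSp_le_maxMult _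
end
end
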